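/- arXiv:2207.02580 — 2 statements merged into one kernel-verified Lean document; each statement's English description precedes it below -/
import Mathlib

section
/- (Generalised Phase Kick-Back, Lemma 2.1.) Let f : 𝔽₂ⁿ → 𝔽₂ᵐ be a Boolean function and let U_f be the linear operator on ℂ-valued functions on 𝔽₂ⁿ × 𝔽₂ᵐ induced by the permutation (x, z) ↦ (x, z ⊕ f(x)) of the computational basis (i.e. (U_f g)(x, z) = g(x, z ⊕ f(x))). For y ∈ 𝔽₂ᵐ, let |γ_y⟩ be the vector on 𝔽₂ᵐ with components γ_y(z) = (1/√(2ᵐ))·(−1)^(y·z). Then for every x ∈ 𝔽₂ⁿ and y ∈ 𝔽₂ᵐ, the vector v given by v(x', z) = (if x' = x then 1 else 0)·(1/√(2ᵐ))·(−1)^(y·z) (that is, |x⟩ ⊗ |γ_y⟩) is an eigenvector of U_f with eigenvalue (−1)^(y·f(x)): U_f v = (−1)^(y·f(x)) · v. -/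
/-- The sign `(−1)^a ∈ ℂ` associated to a bit `a ∈ 𝔽₂`. -/
noncomputable def sgn (a : ZMod 2) : ℂ := (-1 : ℂ) ^ a.val

/-- The pairing `y·z = Σᵢ yᵢ·zᵢ ∈ 𝔽₂` of two binary strings. -/
def dotp {m : ℕ} (y z : Fin m → ZMod 2) : ZMod 2 := ∑ i, y i * z i

/-- The operator `U_f` on ℂ-valued functions on `𝔽₂ⁿ × 𝔽₂ᵐ`, induced by the
permutation `(x, z) ↦ (x, z ⊕ f(x))` of the computational basis:
`(U_f g)(x, z) = g(x, z ⊕ f(x))`. -/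
def Uf {n m : ℕ} (f : (Fin n → ZMod 2) → (Fin m → ZMod 2))
    (g : (Fin n → ZMod 2) × (Fin m → ZMod 2) → ℂ) :
    (Fin n → ZMod 2) × (Fin m → ZMod 2) → ℂ :=
  fun p => g (p.1, p.2 + f p.1)

/-! On the second register `z ↦ (−1)^(y·z)` is a character of `𝔽₂ᵐ`, so shifting `z` by `f(x)`
multiplies it by `(−1)^(y·f(x))`; away from `x' = x` both sides vanish. -/

lemma sgn_add (a b : ZMod 2) : sgn (a + b) = sgn a * sgn b := by
  rw [sgn, sgn, sgn, ZMod.val_add, ← pow_add, ← neg_one_pow_eq_pow_mod_two]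

lemma dotp_add_right {m : ℕ} (y z w : Fin m → ZMod 2) :
    dotp y (z + w) = dotp y z + dotp y w := by
  simp only [dotp, Pi.add_apply, mul_add, Finset.sum_add_distrib]

lemma sgn_dotp_add_right {m : ℕ} (y z w : Fin m → ZMod 2) :
    sgn (dotp y (z + w)) = sgn (dotp y z) * sgn (dotp y w) := by
  rw [dotp_add_right, sgn_add]

/-- Generalised Phase Kick-Back (Lemma 2.1): for every `x ∈ 𝔽₂ⁿ` and
`y ∈ 𝔽₂ᵐ`, the vector `|x⟩ ⊗ |γ_y⟩` is an eigenvector of `U_f` with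
eigenvalue `(−1)^(y·f(x))`. -/
theorem generalised_phase_kick_back {n m : ℕ}
    (f : (Fin n → ZMod 2) → (Fin m → ZMod 2))
    (x : Fin n → ZMod 2) (y : Fin m → ZMod 2)
    (v : (Fin n → ZMod 2) × (Fin m → ZMod 2) → ℂ)
    (hv : ∀ x' z, v (x', z) =
      (if x' = x then 1 else 0) *
        (((Real.sqrt (2 ^ m) : ℝ)⁻¹ : ℂ) * sgn (dotp y z))) :
    Uf f v = fun p => sgn (dotp y (f x)) * v p := by
  funext ⟨x', z⟩
  simp only [Uf, hv]
  by_cases hx' : x' = x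
  · subst hx'
    rw [sgn_dotp_add_right]
    ring
  · simp [hx']
end

section
/- (Correctness of the Deutsch–Jozsa algorithm.) Let n ≥ 1 and let f : 𝔽₂ⁿ → 𝔽₂ satisfy the promise that either f is constant, or f is balanced (f takes the value 0 on exactly 2^(n−1) inputs and the value 1 on exactly 2^(n−1) inputs). Then the amplitude (1/2ⁿ)·Σ_{x ∈ 𝔽₂ⁿ} (−1)^(f(x)) of |0⟩ₙ in the final state of the Deutsch–Jozsa algorithm equals ±1 if f is constant and 0 if f is balanced; in particular f is constant if and only if Σ_{x ∈ 𝔽₂ⁿ} (−1)^(f(x)) ≠ 0. -/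
open Finset

lemma ZMod.eq_zero_or_eq_one_of_two (a : ZMod 2) : a = 0 ∨ a = 1 := by
  revert a; decide

@[simp] lemma sgn_zero : sgn 0 = 1 := by simp [sgn]

@[simp] lemma sgn_one : sgn 1 = -1 := by simp [sgn, ZMod.val_one]

lemma sgn_ne_zero (a : ZMod 2) : sgn a ≠ 0 := pow_ne_zero _ (neg_ne_zero.2 one_ne_zero)

lemma sgn_eq_one_or_eq_neg_one (a : ZMod 2) : sgn a = 1 ∨ sgn a = -1 := by
  rcases a.eq_zero_or_eq_one_of_two with rfl | rfl <;> simp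

section
variable {α : Type*} [Fintype α] (f : α → ZMod 2)

lemma sum_sgn_eq_card_sub_card :
    ∑ x, sgn (f x) = (#{x | f x = 0} : ℂ) - #{x | f x = 1} := by
  have hne : univ.filter (fun x => ¬f x = 0) = univ.filter (fun x => f x = 1) :=
    filter_congr fun x _ => by rcases (f x).eq_zero_or_eq_one_of_two with h | h <;> simp [h]
  rw [← sum_filter_add_sum_filter_not univ (fun x => f x = 0), hne,
    sum_congr rfl fun x hx => congrArg sgn (mem_filter.1 hx).2,
    sum_congr rfl fun x hx => congrArg sgn (mem_filter.1 hx).2]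
  simp [sub_eq_add_neg]

lemma sum_sgn_eq_zero_of_card_eq (h : #{x | f x = 0} = #{x | f x = 1}) :
    ∑ x, sgn (f x) = 0 := by
  rw [sum_sgn_eq_card_sub_card, h, sub_self]

lemma sum_sgn_of_forall_eq {c : ZMod 2} (hc : ∀ x, f x = c) :
    ∑ x, sgn (f x) = Fintype.card α * sgn c := by
  simp [hc]

variable [Nonempty α]

lemma inv_card_mul_sum_sgn_of_forall_eq {c : ZMod 2} (hc : ∀ x, f x = c) :
    (Fintype.card α : ℂ)⁻¹ * ∑ x, sgn (f x) = sgn c := by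
  rw [sum_sgn_of_forall_eq f hc, inv_mul_cancel_left₀ (by simp)]

lemma sum_sgn_ne_zero_of_forall_eq {c : ZMod 2} (hc : ∀ x, f x = c) :
    ∑ x, sgn (f x) ≠ 0 := by
  rw [sum_sgn_of_forall_eq f hc]
  exact mul_ne_zero (by simp) (sgn_ne_zero c)

end

theorem deutsch_jozsa_general {n : ℕ}
    (f : (Fin n → ZMod 2) → ZMod 2)
    (hprom : (∃ c, ∀ x, f x = c) ∨
      ((Finset.univ.filter (fun x : Fin n → ZMod 2 => f x = 0)).card = 2 ^ (n - 1) ∧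
       (Finset.univ.filter (fun x : Fin n → ZMod 2 => f x = 1)).card = 2 ^ (n - 1))) :
    ((∃ c, ∀ x, f x = c) →
      ((2 : ℂ) ^ n)⁻¹ * (∑ x : Fin n → ZMod 2, sgn (f x)) = 1 ∨
      ((2 : ℂ) ^ n)⁻¹ * (∑ x : Fin n → ZMod 2, sgn (f x)) = -1) ∧
    (((Finset.univ.filter (fun x : Fin n → ZMod 2 => f x = 0)).card = 2 ^ (n - 1) ∧
      (Finset.univ.filter (fun x : Fin n → ZMod 2 => f x = 1)).card = 2 ^ (n - 1)) →
      ((2 : ℂ) ^ n)⁻¹ * (∑ x : Fin n → ZMod 2, sgn (f x)) = 0) ∧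
    ((∃ c, ∀ x, f x = c) ↔ (∑ x : Fin n → ZMod 2, sgn (f x)) ≠ 0) := by
  have hcard : (2 : ℂ) ^ n = Fintype.card (Fin n → ZMod 2) := by simp
  have hbalanced : (#{x | f x = 0} = 2 ^ (n - 1) ∧ #{x | f x = 1} = 2 ^ (n - 1)) →
      ∑ x, sgn (f x) = 0 :=
    fun ⟨h0, h1⟩ => sum_sgn_eq_zero_of_card_eq f (h0.trans h1.symm)
  refine ⟨fun ⟨c, hc⟩ => ?_, fun h => by rw [hbalanced h, mul_zero],
    fun ⟨c, hc⟩ => sum_sgn_ne_zero_of_forall_eq f hc,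
    fun hne => hprom.resolve_right (hne ∘ hbalanced)⟩
  rw [hcard, inv_card_mul_sum_sgn_of_forall_eq f hc]
  exact sgn_eq_one_or_eq_neg_one c

/-- Correctness of the Deutsch–Jozsa algorithm: under the promise that `f` is
constant or balanced, the amplitude `(1/2ⁿ)·Σ_x (−1)^(f(x))` of `|0⟩ₙ` in the
final state is `±1` if `f` is constant and `0` if `f` is balanced; in
particular `f` is constant iff `Σ_x (−1)^(f(x)) ≠ 0`. -/
theorem deutsch_jozsa {n : ℕ} (hn : 1 ≤ n)
    (f : (Fin n → ZMod 2) → ZMod 2)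
    (hprom : (∃ c, ∀ x, f x = c) ∨
      ((Finset.univ.filter (fun x : Fin n → ZMod 2 => f x = 0)).card = 2 ^ (n - 1) ∧
       (Finset.univ.filter (fun x : Fin n → ZMod 2 => f x = 1)).card = 2 ^ (n - 1))) :
    ((∃ c, ∀ x, f x = c) →
      ((2 : ℂ) ^ n)⁻¹ * (∑ x : Fin n → ZMod 2, sgn (f x)) = 1 ∨
      ((2 : ℂ) ^ n)⁻¹ * (∑ x : Fin n → ZMod 2, sgn (f x)) = -1) ∧
    (((Finset.univ.filter (fun x : Fin n → ZMod 2 => f x = 0)).card = 2 ^ (n - 1) ∧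
      (Finset.univ.filter (fun x : Fin n → ZMod 2 => f x = 1)).card = 2 ^ (n - 1)) →
      ((2 : ℂ) ^ n)⁻¹ * (∑ x : Fin n → ZMod 2, sgn (f x)) = 0) ∧
    ((∃ c, ∀ x, f x = c) ↔ (∑ x : Fin n → ZMod 2, sgn (f x)) ≠ 0) :=
  deutsch_jozsa_general f hprom
end
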